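/- arXiv:2210.06721 — 2 statements merged into one kernel-verified Lean document; each statement's English description precedes it below -/
import Mathlib

section
/- If F is an entire function and z₀ is a local minimum of H(z) = |F(z)|² e^{-|z|²} with H(z₀) > 0, then a contradiction follows; i.e., every local minimum of H is a zero of F. -/
/-!
Multiplying `F` by the zero-free factor `e^{-z z̄₀}` gives an entire `G` with
`H z = |G z|² e^{|z₀|² - |z - z₀|²}`. The Gaussian factor peaks at `z₀`, so a local minimum of `H`
at `z₀` is one of `|G|`. By the minimum modulus principle either `G z₀ = 0`, or `G` is constant
near `z₀`; in the latter case `H` has a strict local maximum at `z₀` unless `G z₀ = 0`.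
-/

open Complex ComplexConjugate Filter Topology

lemma exp_neg_sq_norm_eq_sq_norm_cexp_mul_exp (z w : ℂ) :
    Real.exp (-‖z‖ ^ 2) = ‖cexp (-(z * conj w))‖ ^ 2 * Real.exp (‖w‖ ^ 2 - ‖z - w‖ ^ 2) := by
  rw [norm_exp, ← Real.exp_nat_mul, ← Real.exp_add]
  simp only [Complex.sq_norm, normSq_sub z w, neg_re]
  congr 1
  push_cast
  ring

section GaussianWeight

variable {E F : Type*}

lemma isLocalMin_norm_of_isLocalMin_sq_norm_mul_exp [SeminormedAddCommGroup E]
    [SeminormedAddCommGroup F] {g : E → F} {z₀ : E} {c : ℝ}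
    (h : IsLocalMin (fun z ↦ ‖g z‖ ^ 2 * Real.exp (c - ‖z - z₀‖ ^ 2)) z₀) :
    IsLocalMin (norm ∘ g) z₀ := by
  filter_upwards [h] with z hz
  rw [sub_self, norm_zero, zero_pow two_ne_zero, sub_zero] at hz
  have hweight : Real.exp (c - ‖z - z₀‖ ^ 2) ≤ Real.exp c := by
    gcongr
    exact sub_le_self c (sq_nonneg _)
  have hsq : ‖g z₀‖ ^ 2 ≤ ‖g z‖ ^ 2 :=
    le_of_mul_le_mul_right (hz.trans (by gcongr)) (Real.exp_pos c)
  exact (pow_le_pow_iff_left₀ (norm_nonneg _) (norm_nonneg _) two_ne_zero).mp hsq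

lemma eq_zero_of_isLocalMin_sq_norm_mul_exp_of_eventuallyEq [NormedAddCommGroup E]
    [NormedSpace ℝ E] [Nontrivial E] [NormedAddCommGroup F] {g : E → F} {z₀ : E} {c : ℝ}
    (h : IsLocalMin (fun z ↦ ‖g z‖ ^ 2 * Real.exp (c - ‖z - z₀‖ ^ 2)) z₀)
    (hg : ∀ᶠ z in 𝓝 z₀, g z = g z₀) : g z₀ = 0 := by
  obtain ⟨z, ⟨hz, hgz⟩, hne⟩ :=
    (((h.and hg).filter_mono nhdsWithin_le_nhds).and (self_mem_nhdsWithin (s := {z₀}ᶜ))).exists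
  simp only [hgz, sub_self, norm_zero, zero_pow two_ne_zero, sub_zero] at hz
  have hweight : Real.exp (c - ‖z - z₀‖ ^ 2) < Real.exp c := by
    gcongr
    exact sub_lt_self c (pow_pos (norm_pos_iff.mpr (sub_ne_zero.mpr hne)) 2)
  by_contra hg₀
  have := mul_lt_mul_of_pos_left hweight (pow_pos (norm_pos_iff.mpr hg₀) 2)
  linarith

lemma eq_zero_of_isLocalMin_sq_norm_mul_exp [NormedAddCommGroup E] [NormedSpace ℂ E]
    [Nontrivial E] {g : E → ℂ} {z₀ : E} {c : ℝ} (hg : ∀ᶠ z in 𝓝 z₀, DifferentiableAt ℂ g z)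
    (h : IsLocalMin (fun z ↦ ‖g z‖ ^ 2 * Real.exp (c - ‖z - z₀‖ ^ 2)) z₀) : g z₀ = 0 :=
  (eventually_eq_or_eq_zero_of_isLocalMin_norm hg
    (isLocalMin_norm_of_isLocalMin_sq_norm_mul_exp h)).elim
    (eq_zero_of_isLocalMin_sq_norm_mul_exp_of_eventuallyEq h) id

end GaussianWeight

/-- every local minimum of `H(z) = |F(z)|² e^{-|z|²}` (for `F` entire)
is a zero of `F`; equivalently, a local minimum with `H z₀ > 0` yields a contradiction. -/
theorem localMin_of_spectrogram_is_zero
    (F : ℂ → ℂ) (hF : Differentiable ℂ F)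
    (H : ℂ → ℝ) (hH : ∀ z, H z = ‖F z‖ ^ 2 * Real.exp (-‖z‖ ^ 2))
    (z₀ : ℂ) (hmin : IsLocalMin H z₀) :
    F z₀ = 0 := by
  set G : ℂ → ℂ := fun z ↦ F z * cexp (-(z * conj z₀))
  have hG : Differentiable ℂ G := hF.mul (differentiable_id.mul_const _).neg.cexp
  have hHG : H = fun z ↦ ‖G z‖ ^ 2 * Real.exp (‖z₀‖ ^ 2 - ‖z - z₀‖ ^ 2) := by
    ext z
    rw [hH, exp_neg_sq_norm_eq_sq_norm_cexp_mul_exp z z₀, norm_mul, mul_pow, mul_assoc]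
  have hGz₀ : G z₀ = 0 :=
    eq_zero_of_isLocalMin_sq_norm_mul_exp (.of_forall fun z ↦ hG z) (hHG ▸ hmin)
  exact (mul_eq_zero.mp hGz₀).resolve_right (exp_ne_zero _)
end

section
/- The density functions D^max(x) = 2x(x² - 2 + 2e^{-x²/2})e^{-x²} and D^sadd(x) = 4x e^{-3x²/2} satisfy ∫_0^∞ D^max(x) dx = 1/3 and ∫_0^∞ D^sadd(x) dx = 4/3; hence the total critical value density D^crit = D^max + D^sadd integrates to 5/3. -/
open MeasureTheory

/-- `D^max(x) = 2x(x² - 2 + 2e^{-x²/2})e^{-x²}`. -/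
noncomputable def Dmax (x : ℝ) : ℝ :=
  2 * x * (x ^ 2 - 2 + 2 * Real.exp (-x ^ 2 / 2)) * Real.exp (-x ^ 2)

/-- `D^sadd(x) = 4x e^{-3x²/2}`. -/
noncomputable def Dsadd (x : ℝ) : ℝ := 4 * x * Real.exp (-3 * x ^ 2 / 2)

/-!
Each density is the derivative of an elementary primitive `F` vanishing at infinity, and is
nonnegative on `[0, ∞)` (for `D^max` because `2e^{-x²/2} ≥ 2 - x²`). For a nonnegative derivative
the fundamental theorem of calculus on `[0, ∞)` gives integrability as well as the value `-F 0`.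
-/

open Real Filter Topology Set

theorem hasDerivAt_exp_mul_sq (a x : ℝ) :
    HasDerivAt (fun y => exp (a * y ^ 2)) (2 * a * x * exp (a * x ^ 2)) x := by
  convert ((hasDerivAt_pow 2 x).const_mul a).exp using 1
  ring

theorem tendsto_exp_mul_sq_atTop {a : ℝ} (ha : a < 0) :
    Tendsto (fun x => exp (a * x ^ 2)) atTop (𝓝 0) :=
  tendsto_exp_atBot.comp <| (tendsto_pow_atTop two_ne_zero).const_mul_atTop_of_neg ha

theorem tendsto_sq_mul_exp_neg_sq_atTop :
    Tendsto (fun x : ℝ => x ^ 2 * exp (-x ^ 2)) atTop (𝓝 0) := by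
  simpa [Function.comp_def] using
    (tendsto_pow_mul_exp_neg_atTop_nhds_zero 1).comp (tendsto_pow_atTop two_ne_zero)

noncomputable def primitiveDmax (x : ℝ) : ℝ :=
  (1 - x ^ 2) * exp (-1 * x ^ 2) - 4 / 3 * exp (-(3 / 2) * x ^ 2)

noncomputable def primitiveDsadd (x : ℝ) : ℝ := -(4 / 3) * exp (-(3 / 2) * x ^ 2)

theorem hasDerivAt_primitiveDmax (x : ℝ) : HasDerivAt primitiveDmax (Dmax x) x := by
  have h := (((hasDerivAt_pow 2 x).const_sub 1).mul (hasDerivAt_exp_mul_sq (-1) x)).sub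
    ((hasDerivAt_exp_mul_sq (-(3 / 2)) x).const_mul (4 / 3))
  have hexp : exp (-(3 / 2) * x ^ 2) = exp (-x ^ 2 / 2) * exp (-x ^ 2) := by
    rw [← exp_add]; ring_nf
  refine (h : HasDerivAt primitiveDmax _ x).congr_deriv ?_
  rw [Dmax, hexp, neg_one_mul]
  ring

theorem hasDerivAt_primitiveDsadd (x : ℝ) : HasDerivAt primitiveDsadd (Dsadd x) x := by
  refine (((hasDerivAt_exp_mul_sq (-(3 / 2)) x).const_mul (-(4 / 3)) :
    HasDerivAt primitiveDsadd _ x)).congr_deriv ?_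
  rw [Dsadd]
  ring_nf

theorem tendsto_primitiveDmax_atTop : Tendsto primitiveDmax atTop (𝓝 0) := by
  have h := ((tendsto_exp_mul_sq_atTop (a := -1) (by norm_num)).sub
    tendsto_sq_mul_exp_neg_sq_atTop).sub
    ((tendsto_exp_mul_sq_atTop (a := -(3 / 2)) (by norm_num)).const_mul (4 / 3))
  simp only [sub_zero, mul_zero] at h
  refine h.congr fun x => ?_
  simp only [primitiveDmax]
  ring_nf

theorem tendsto_primitiveDsadd_atTop : Tendsto primitiveDsadd atTop (𝓝 0) := by
  have h := (tendsto_exp_mul_sq_atTop (a := -(3 / 2)) (by norm_num)).const_mul (-(4 / 3))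
  rwa [mul_zero] at h

theorem Dmax_nonneg {x : ℝ} (hx : 0 ≤ x) : 0 ≤ Dmax x := by
  have : 0 ≤ x ^ 2 - 2 + 2 * exp (-x ^ 2 / 2) := by linarith [add_one_le_exp (-x ^ 2 / 2)]
  unfold Dmax
  positivity

theorem Dsadd_nonneg {x : ℝ} (hx : 0 ≤ x) : 0 ≤ Dsadd x := by
  unfold Dsadd
  positivity

theorem integrableOn_Dmax : IntegrableOn Dmax (Ioi 0) :=
  integrableOn_Ioi_deriv_of_nonneg' (fun x _ => hasDerivAt_primitiveDmax x)
    (fun _ hx => Dmax_nonneg hx.le) tendsto_primitiveDmax_atTop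

theorem integrableOn_Dsadd : IntegrableOn Dsadd (Ioi 0) :=
  integrableOn_Ioi_deriv_of_nonneg' (fun x _ => hasDerivAt_primitiveDsadd x)
    (fun _ hx => Dsadd_nonneg hx.le) tendsto_primitiveDsadd_atTop

theorem integral_Dmax : ∫ x in Ioi 0, Dmax x = 1 / 3 := by
  rw [integral_Ioi_of_hasDerivAt_of_nonneg' (fun x _ => hasDerivAt_primitiveDmax x)
    (fun _ hx => Dmax_nonneg hx.le) tendsto_primitiveDmax_atTop]
  norm_num [primitiveDmax]

theorem integral_Dsadd : ∫ x in Ioi 0, Dsadd x = 4 / 3 := by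
  rw [integral_Ioi_of_hasDerivAt_of_nonneg' (fun x _ => hasDerivAt_primitiveDsadd x)
    (fun _ hx => Dsadd_nonneg hx.le) tendsto_primitiveDsadd_atTop]
  norm_num [primitiveDsadd]

/-- `∫_0^∞ D^max = 1/3`, `∫_0^∞ D^sadd = 4/3`, hence the total critical
value density `D^crit = D^max + D^sadd` integrates to `5/3`. -/
theorem density_integrals :
    (∫ x in Set.Ioi (0 : ℝ), Dmax x = 1 / 3) ∧
    (∫ x in Set.Ioi (0 : ℝ), Dsadd x = 4 / 3) ∧
    (∫ x in Set.Ioi (0 : ℝ), (Dmax x + Dsadd x) = 5 / 3) := by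
  refine ⟨integral_Dmax, integral_Dsadd, ?_⟩
  rw [integral_add integrableOn_Dmax integrableOn_Dsadd, integral_Dmax, integral_Dsadd]
  norm_num
end
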